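/- Let $(\mathfrak{g}, r, \psi)$ be a Lie algebra with a twisted triangular $r$-matrix structure, and equip $\mathfrak{g}^*$ with the Lie bracket $[\alpha,\beta]_{r,\psi}$. Then the map $r^\sharp : \mathfrak{g}^* \to \mathfrak{g}$ is a homomorphism of Lie algebras. -/

import Mathlib

/-!
Pair `r^♯[α, β]_{r,ψ} - [r^♯α, r^♯β]` with an arbitrary `γ ∈ g*`. Skew-symmetry of `r` moves
`r^♯` onto `γ`, turning `γ (r^♯[α, β]_{r,ψ})` into `-[α, β]_{r,ψ} (r^♯γ)`, and the twisted
classical Yang–Baxter equation `½[r, r] = (∧³r^♯)ψ`, evaluated on `(α, β, γ)`, says that this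
equals `γ [r^♯α, r^♯β]`. Since the dual of a vector space separates points, the two vectors agree.
-/

/-- The bracket `[α,β]_{r,ψ} = ad*_{r^♯α}(β) - ad*_{r^♯β}(α) + ψ(r^♯α, r^♯β, ·)`
on the dual of a Lie algebra `g`, where `r^♯` is the map induced by `r ∈ ∧²g` and
`ψ` is a trilinear form (a 3-cochain of `g`), written here in curried form. -/
noncomputable def twBracket {g : Type*} [LieRing g] [LieAlgebra ℝ g]
    (rsharp : Module.Dual ℝ g →ₗ[ℝ] g)
    (ψ : g →ₗ[ℝ] g →ₗ[ℝ] Module.Dual ℝ g)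
    (α β : Module.Dual ℝ g) : Module.Dual ℝ g :=
  ψ (rsharp α) (rsharp β)
    - β ∘ₗ (LieAlgebra.ad ℝ g (rsharp α))
    + α ∘ₗ (LieAlgebra.ad ℝ g (rsharp β))

section TwistedBracket

variable {g : Type*} [LieRing g] [LieAlgebra ℝ g]
  (rsharp : Module.Dual ℝ g →ₗ[ℝ] g) (ψ : g →ₗ[ℝ] g →ₗ[ℝ] Module.Dual ℝ g)

theorem twBracket_apply (α β : Module.Dual ℝ g) (X : g) :
    twBracket rsharp ψ α β X = ψ (rsharp α) (rsharp β) X - β ⁅rsharp α, X⁆ + α ⁅rsharp β, X⁆ :=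
  rfl

variable {rsharp ψ}

theorem dual_apply_rsharp_twBracket
    (hskew : ∀ α β : Module.Dual ℝ g, β (rsharp α) = - α (rsharp β))
    (hcybe : ∀ α β γ : Module.Dual ℝ g,
      γ ⁅rsharp α, rsharp β⁆ + α ⁅rsharp β, rsharp γ⁆ + β ⁅rsharp γ, rsharp α⁆
        = - ψ (rsharp α) (rsharp β) (rsharp γ))
    (α β γ : Module.Dual ℝ g) :
    γ (rsharp (twBracket rsharp ψ α β)) = γ ⁅rsharp α, rsharp β⁆ := by
  have hcybe_αβγ := hcybe α β γ
  rw [← lie_skew (rsharp γ), map_neg] at hcybe_αβγ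
  rw [hskew, twBracket_apply]
  linarith

end TwistedBracket

theorem statement1_general (g : Type*) [LieRing g] [LieAlgebra ℝ g]
    (rsharp : Module.Dual ℝ g →ₗ[ℝ] g)
    (hskew : ∀ α β : Module.Dual ℝ g, β (rsharp α) = - α (rsharp β))
    (ψ : g →ₗ[ℝ] g →ₗ[ℝ] Module.Dual ℝ g)
    (hcybe : ∀ α β γ : Module.Dual ℝ g,
      γ ⁅rsharp α, rsharp β⁆ + α ⁅rsharp β, rsharp γ⁆ + β ⁅rsharp γ, rsharp α⁆
        = - ψ (rsharp α) (rsharp β) (rsharp γ)) :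
    ∀ α β : Module.Dual ℝ g,
      rsharp (twBracket rsharp ψ α β) = ⁅rsharp α, rsharp β⁆ := fun α β ↦
  Module.eval_apply_injective ℝ <| LinearMap.ext fun γ ↦
    dual_apply_rsharp_twBracket hskew hcybe α β γ

/-- `r^♯ : g* → g` is a Lie algebra homomorphism from `(g*, [·,·]_{r,ψ})` to `g`. -/
theorem statement1 (g : Type*) [LieRing g] [LieAlgebra ℝ g] [FiniteDimensional ℝ g]
    (rsharp : Module.Dual ℝ g →ₗ[ℝ] g)
    (hskew : ∀ α β : Module.Dual ℝ g, β (rsharp α) = - α (rsharp β))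
    (ψ : g →ₗ[ℝ] g →ₗ[ℝ] Module.Dual ℝ g)
    (halt1 : ∀ X Y : g, ψ X X Y = 0)
    (halt2 : ∀ X Y : g, ψ X Y Y = 0)
    (hcocycle : ∀ X Y Z W : g,
      ψ ⁅X, Y⁆ Z W - ψ ⁅X, Z⁆ Y W + ψ ⁅X, W⁆ Y Z
        + ψ ⁅Y, Z⁆ X W - ψ ⁅Y, W⁆ X Z + ψ ⁅Z, W⁆ X Y = 0)
    (hcybe : ∀ α β γ : Module.Dual ℝ g,
      γ ⁅rsharp α, rsharp β⁆ + α ⁅rsharp β, rsharp γ⁆ + β ⁅rsharp γ, rsharp α⁆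
        = - ψ (rsharp α) (rsharp β) (rsharp γ)) :
    ∀ α β : Module.Dual ℝ g,
      rsharp (twBracket rsharp ψ α β) = ⁅rsharp α, rsharp β⁆ :=
  statement1_general g rsharp hskew ψ hcybe
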